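/- The distance constant for ℂI₂ ⊗ B(H) inside M₂(B(H)) is at most 3/2: for every T ∈ M₂(B(H)), dist(T, ℂI₂ ⊗ B(H)) ≤ (3/2) · sup over projections P in the lattice of invariant subspaces of ℂI₂ ⊗ B(H) of ‖P^⊥ T P‖. -/

import Mathlib

set_option linter.unusedSectionVars false

set_option synthInstance.maxHeartbeats 1000000
set_option maxHeartbeats 1000000

instance piLpCompleteSpace {ι : Type*} [Fintype ι] {β : ι → Type*}
    [∀ i, NormedAddCommGroup (β i)] [∀ i, CompleteSpace (β i)] :
    CompleteSpace (PiLp 2 β) :=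
  inferInstance

variable {H : Type*} [NormedAddCommGroup H] [InnerProductSpace ℂ H] [CompleteSpace H]

noncomputable def projn {n : ℕ} (i : Fin n) :
    (PiLp 2 fun _ : Fin n => H) →L[ℂ] H :=
  (ContinuousLinearMap.proj i).comp
    ((PiLp.continuousLinearEquiv 2 ℂ (fun _ : Fin n => H) :
      (PiLp 2 fun _ : Fin n => H) ≃L[ℂ] ∀ _ : Fin n, H) :
      (PiLp 2 fun _ : Fin n => H) →L[ℂ] ∀ _ : Fin n, H)

abbrev HS (H : Type*) := PiLp 2 fun _ : Fin 2 => H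

local notation "⟪" x ", " y "⟫" => @inner ℂ _ _ x y

noncomputable def incl (i : Fin 2) : H →L[ℂ] HS H :=
  (((PiLp.continuousLinearEquiv 2 ℂ (fun _ : Fin 2 => H)).symm :
      (∀ _ : Fin 2, H) ≃L[ℂ] HS H) :
      (∀ _ : Fin 2, H) →L[ℂ] HS H).comp
    (ContinuousLinearMap.pi fun k => if k = i then ContinuousLinearMap.id ℂ H else 0)

@[simp] lemma projn_apply (i : Fin 2) (y : HS H) : projn i y = y i := rfl

@[simp] lemma incl_apply (i : Fin 2) (x : H) (k : Fin 2) :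
    (incl i x) k = if k = i then x else 0 := by
  simp only [incl, ContinuousLinearMap.comp_apply]
  show (ContinuousLinearMap.pi fun k => if k = i then ContinuousLinearMap.id ℂ H else 0) x k
    = if k = i then x else 0
  rw [ContinuousLinearMap.pi_apply]
  by_cases h : k = i <;> simp [h]

lemma hs_ext {y z : HS H} (h : ∀ k, y k = z k) : y = z := PiLp.ext h

@[simp] lemma hs_add_apply (y z : HS H) (k : Fin 2) : (y + z) k = y k + z k := rfl
@[simp] lemma hs_sub_apply (y z : HS H) (k : Fin 2) : (y - z) k = y k - z k := rfl
@[simp] lemma hs_neg_apply (y : HS H) (k : Fin 2) : (-y) k = -(y k) := rfl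
@[simp] lemma hs_smul_apply (c : ℂ) (y : HS H) (k : Fin 2) : (c • y) k = c • (y k) := rfl

lemma sum_incl (y : HS H) : incl 0 (y 0) + incl 1 (y 1) = y := by
  apply hs_ext
  intro k
  fin_cases k <;> simp

lemma adjoint_projn (j : Fin 2) :
    ContinuousLinearMap.adjoint (projn (H := H) j) = incl j := by
  refine ((ContinuousLinearMap.eq_adjoint_iff (incl j) (projn (H := H) j)).mpr ?_).symm
  intro x y
  simp only [PiLp.inner_apply, Fin.sum_univ_two, incl_apply, projn_apply]
  fin_cases j <;> simp
set_option linter.unusedSectionVars false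

noncomputable def entryL {n : ℕ} (i j : Fin n) :
    ((PiLp 2 fun _ : Fin n => H) →L[ℂ] (PiLp 2 fun _ : Fin n => H)) →ₗ[ℂ]
      (H →L[ℂ] H) where
  toFun T := (projn i).comp (T.comp (ContinuousLinearMap.adjoint (projn j)))
  map_add' T U := by ext x; simp
  map_smul' c T := by ext x; simp

noncomputable def CI2BH (H : Type*) [NormedAddCommGroup H] [InnerProductSpace ℂ H]
    [CompleteSpace H] :
    Submodule ℂ ((PiLp 2 fun _ : Fin 2 => H) →L[ℂ] (PiLp 2 fun _ : Fin 2 => H)) :=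
  LinearMap.ker (entryL 0 1) ⊓ LinearMap.ker (entryL 1 0) ⊓
    LinearMap.ker ((entryL (H := H) 0 0) - entryL 1 1)

lemma entryL_apply (i j : Fin 2) (S : HS H →L[ℂ] HS H) (x : H) :
    entryL i j S x = (S (incl j x)) i := by
  simp [entryL, adjoint_projn]

noncomputable def M2 (a b c d : H →L[ℂ] H) : HS H →L[ℂ] HS H :=
  (incl 0).comp (a.comp (projn 0)) + (incl 0).comp (b.comp (projn 1)) +
    (incl 1).comp (c.comp (projn 0)) + (incl 1).comp (d.comp (projn 1))

@[simp] lemma M2_apply_zero (a b c d : H →L[ℂ] H) (y : HS H) :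
    (M2 a b c d y) 0 = a (y 0) + b (y 1) := by
  simp [M2]

@[simp] lemma M2_apply_one (a b c d : H →L[ℂ] H) (y : HS H) :
    (M2 a b c d y) 1 = c (y 0) + d (y 1) := by
  simp [M2]

lemma entryL_M2 (a b c d : H →L[ℂ] H) :
    (entryL 0 0 (M2 a b c d) = a ∧ entryL 0 1 (M2 a b c d) = b) ∧
      entryL 1 0 (M2 a b c d) = c ∧ entryL 1 1 (M2 a b c d) = d := by
  refine ⟨⟨?_, ?_⟩, ?_, ?_⟩ <;> · ext x; simp [entryL_apply]

lemma apply_eq (S : HS H →L[ℂ] HS H) (y : HS H) (k : Fin 2) :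
    (S y) k = entryL k 0 S (y 0) + entryL k 1 S (y 1) := by
  conv_lhs => rw [← sum_incl y]
  simp [entryL_apply]

lemma entry_mul (i j : Fin 2) (A B : HS H →L[ℂ] HS H) :
    entryL i j (A * B) =
      (entryL i 0 A).comp (entryL 0 j B) + (entryL i 1 A).comp (entryL 1 j B) := by
  ext x
  simp only [ContinuousLinearMap.add_apply, ContinuousLinearMap.comp_apply, entryL_apply,
    ContinuousLinearMap.mul_apply]
  rw [apply_eq A (B (incl j x)) i]
  simp [entryL_apply]
noncomputable def w1 : HS H →L[ℂ] HS H := M2 1 0 0 (-1)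
noncomputable def w2 : HS H →L[ℂ] HS H := M2 0 1 1 0
noncomputable def w3 : HS H →L[ℂ] HS H :=
  M2 0 (Complex.I • 1) ((-Complex.I) • 1) 0

noncomputable def Davg (T : HS H →L[ℂ] HS H) : HS H →L[ℂ] HS H :=
  (4 : ℂ)⁻¹ • (T + w1 * T * w1 + w2 * T * w2 + w3 * T * w3)

lemma entry_mul3 (i j : Fin 2) (A T B : HS H →L[ℂ] HS H) :
    entryL i j (A * T * B) =
      (entryL i 0 A).comp ((entryL 0 0 T).comp (entryL 0 j B)) +
      (entryL i 0 A).comp ((entryL 0 1 T).comp (entryL 1 j B)) +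
      (entryL i 1 A).comp ((entryL 1 0 T).comp (entryL 0 j B)) +
      (entryL i 1 A).comp ((entryL 1 1 T).comp (entryL 1 j B)) := by
  rw [entry_mul, entry_mul, entry_mul]
  simp only [ContinuousLinearMap.add_comp, ContinuousLinearMap.comp_add,
    ContinuousLinearMap.comp_assoc]
  abel

lemma Davg_mem (T : HS H →L[ℂ] HS H) : Davg T ∈ CI2BH H := by
  obtain ⟨⟨a1, b1⟩, c1, d1⟩ := entryL_M2 (H := H) 1 0 0 (-1)
  obtain ⟨⟨a2, b2⟩, c2, d2⟩ := entryL_M2 (H := H) 0 1 1 0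
  obtain ⟨⟨a3, b3⟩, c3, d3⟩ := entryL_M2 (H := H) 0 (Complex.I • 1) ((-Complex.I) • 1) 0
  refine Submodule.mem_inf.mpr ⟨Submodule.mem_inf.mpr ⟨LinearMap.mem_ker.mpr ?_,
    LinearMap.mem_ker.mpr ?_⟩, LinearMap.mem_ker.mpr ?_⟩ <;>
  · simp only [Davg, LinearMap.sub_apply, map_smul, map_add, entry_mul3, w1, w2, w3,
      a1, b1, c1, d1, a2, b2, c2, d2, a3, b3, c3, d3]
    ext x
    simp [smul_smul, Complex.I_mul_I]
    try module
noncomputable def projOf {E : Type*} [NormedAddCommGroup E] [InnerProductSpace ℂ E]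
    [CompleteSpace E]
    (V : Submodule ℂ E) (hV : IsClosed (V : Set E)) : E →L[ℂ] E :=
  haveI : CompleteSpace V := hV.completeSpace_coe
  V.subtypeL.comp (V.orthogonalProjectionOnto)

section ProjFacts

variable {E : Type*} [NormedAddCommGroup E] [InnerProductSpace ℂ E] [CompleteSpace E]
  (V : Submodule ℂ E) (hV : IsClosed (V : Set E))

lemma projOf_mem (y : E) : projOf V hV y ∈ V := by
  haveI : CompleteSpace V := hV.completeSpace_coe
  exact (V.orthogonalProjectionOnto y).2

lemma projOf_sub_mem (y : E) : y - projOf V hV y ∈ Vᗮ := by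
  haveI : CompleteSpace V := hV.completeSpace_coe
  exact V.sub_starProjection_mem_orthogonal y

lemma projOf_eq_of (y v : E) (hm : v ∈ V) (ho : y - v ∈ Vᗮ) : projOf V hV y = v := by
  haveI : CompleteSpace V := hV.completeSpace_coe
  exact V.eq_starProjection_of_mem_orthogonal hm ho

lemma projOf_of_mem (v : E) (hm : v ∈ V) : projOf V hV v = v :=
  projOf_eq_of V hV v v hm (by simp)

lemma projOf_idem (y : E) : projOf V hV (projOf V hV y) = projOf V hV y :=
  projOf_of_mem V hV _ (projOf_mem V hV y)

lemma pyth (y : E) : ‖projOf V hV y‖ ^ 2 + ‖y - projOf V hV y‖ ^ 2 = ‖y‖ ^ 2 := by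
  have h0 : @inner ℂ _ _ (projOf V hV y) (y - projOf V hV y) = 0 :=
    Submodule.inner_right_of_mem_orthogonal (projOf_mem V hV y) (projOf_sub_mem V hV y)
  have := norm_add_sq_eq_norm_sq_add_norm_sq_of_inner_eq_zero _ _ h0
  rw [add_sub_cancel] at this
  linarith

lemma le_of_sq_le_sq' {a b : ℝ} (ha : 0 ≤ a) (hb : 0 ≤ b) (h : a ^ 2 ≤ b ^ 2) : a ≤ b := by
  nlinarith

lemma norm_projOf_apply_le (y : E) : ‖projOf V hV y‖ ≤ ‖y‖ :=
  le_of_sq_le_sq' (norm_nonneg _) (norm_nonneg _) (by nlinarith [pyth V hV y, sq_nonneg ‖y - projOf V hV y‖])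

lemma norm_sub_projOf_apply_le (y : E) : ‖y - projOf V hV y‖ ≤ ‖y‖ :=
  le_of_sq_le_sq' (norm_nonneg _) (norm_nonneg _) (by nlinarith [pyth V hV y, sq_nonneg ‖projOf V hV y‖])

lemma norm_sym_apply (y : E) : ‖((2 : ℂ) • projOf V hV - 1) y‖ = ‖y‖ := by
  have h0 : @inner ℂ _ _ (projOf V hV y) (-(y - projOf V hV y)) = 0 := by
    rw [inner_neg_right,
      Submodule.inner_right_of_mem_orthogonal (projOf_mem V hV y) (projOf_sub_mem V hV y), neg_zero]
  have h1 : ((2 : ℂ) • projOf V hV - 1) y = projOf V hV y + -(y - projOf V hV y) := by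
    simp only [ContinuousLinearMap.sub_apply, ContinuousLinearMap.smul_apply,
      ContinuousLinearMap.one_apply]
    module
  have h2 := norm_add_sq_eq_norm_sq_add_norm_sq_of_inner_eq_zero _ _ h0
  rw [← h1] at h2
  rw [norm_neg] at h2
  have := pyth V hV y
  refine le_antisymm (le_of_sq_le_sq' (norm_nonneg _) (norm_nonneg _) (by nlinarith))
    (le_of_sq_le_sq' (norm_nonneg _) (norm_nonneg _) (by nlinarith))

lemma commutator_bound (T : E →L[ℂ] E) {s : ℝ} (hs : 0 ≤ s)
    (h1 : ‖(1 - projOf V hV) * T * projOf V hV‖ ≤ s)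
    (h2 : ‖projOf V hV * T * (1 - projOf V hV)‖ ≤ s) :
    ‖projOf V hV * T - T * projOf V hV‖ ≤ s := by
  set P := projOf V hV with hP
  refine ContinuousLinearMap.opNorm_le_bound _ hs fun y => ?_
  set u := (P * T * (1 - P)) y with hu
  set v := ((1 - P) * T * P) y with hv
  have hdec : (P * T - T * P) y = u + -v := by
    simp only [hu, hv, ContinuousLinearMap.sub_apply, ContinuousLinearMap.mul_apply,
      ContinuousLinearMap.one_apply, map_sub]
    abel
  have hinner : @inner ℂ _ _ u (-v) = 0 := by
    rw [inner_neg_right]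
    have humem : u ∈ V := projOf_mem V hV _
    have hvmem : v ∈ Vᗮ := by
      have : v = T (P y) - P (T (P y)) := by
        simp [hv, ContinuousLinearMap.mul_apply]
      rw [this]
      exact projOf_sub_mem V hV _
    rw [Submodule.inner_right_of_mem_orthogonal humem hvmem, neg_zero]
  have hpy := norm_add_sq_eq_norm_sq_add_norm_sq_of_inner_eq_zero _ _ hinner
  rw [← hdec, norm_neg] at hpy
  have hub : ‖u‖ ≤ s * ‖y - P y‖ := by
    have : u = (P * T * (1 - P)) (y - P y) := by
      simp only [ContinuousLinearMap.mul_apply, ContinuousLinearMap.one_apply,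
        ContinuousLinearMap.sub_apply, hu, map_sub]
      rw [projOf_idem V hV y]
      simp [← hP]
    rw [this]
    calc ‖(P * T * (1 - P)) (y - P y)‖ ≤ ‖P * T * (1 - P)‖ * ‖y - P y‖ :=
          ContinuousLinearMap.le_opNorm _ _
      _ ≤ s * ‖y - P y‖ := by
          exact mul_le_mul_of_nonneg_right h2 (norm_nonneg _)
  have hvb : ‖v‖ ≤ s * ‖P y‖ := by
    have : v = ((1 - P) * T * P) (P y) := by
      simp only [ContinuousLinearMap.mul_apply, hv]
      rw [projOf_idem V hV y]
    rw [this]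
    calc ‖((1 - P) * T * P) (P y)‖ ≤ ‖(1 - P) * T * P‖ * ‖P y‖ :=
          ContinuousLinearMap.le_opNorm _ _
      _ ≤ s * ‖P y‖ := mul_le_mul_of_nonneg_right h1 (norm_nonneg _)
  have hpyth := pyth V hV y
  refine le_of_sq_le_sq' (norm_nonneg _) (by positivity) ?_
  have h2' : ‖(P * T - T * P) y‖ ^ 2 = ‖u‖ ^ 2 + ‖v‖ ^ 2 := by
    rw [pow_two, pow_two, pow_two]; exact hpy
  rw [h2']
  have : (s * ‖y‖) ^ 2 = s ^ 2 * (‖P y‖ ^ 2 + ‖y - P y‖ ^ 2) := by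
    rw [hpyth]; ring
  rw [this]
  nlinarith [norm_nonneg u, norm_nonneg v, norm_nonneg (P y), norm_nonneg (y - P y),
    sq_nonneg s]

end ProjFacts
noncomputable def Vline (α : ℂ) : Submodule ℂ (HS H) :=
  LinearMap.ker (((projn 1 - α • projn 0 : HS H →L[ℂ] H)) : HS H →ₗ[ℂ] H)

noncomputable def Vv (H : Type*) [NormedAddCommGroup H] [InnerProductSpace ℂ H]
    [CompleteSpace H] : Submodule ℂ (HS H) :=
  LinearMap.ker ((projn (H := H) 0 : HS H →L[ℂ] H) : HS H →ₗ[ℂ] H)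

lemma mem_Vline (α : ℂ) (y : HS H) : y ∈ Vline α ↔ y 1 = α • y 0 := by
  simp [Vline, LinearMap.mem_ker, sub_eq_zero]

lemma mem_Vv (y : HS H) : y ∈ Vv H ↔ y 0 = 0 := by
  simp [Vv, LinearMap.mem_ker]

lemma Vline_closed (α : ℂ) : IsClosed ((Vline (H := H) α : Submodule ℂ (HS H)) : Set (HS H)) :=
  ContinuousLinearMap.isClosed_ker _

lemma Vv_closed : IsClosed ((Vv H : Submodule ℂ (HS H)) : Set (HS H)) :=
  ContinuousLinearMap.isClosed_ker _

lemma mem_CI2BH_iff (A : HS H →L[ℂ] HS H) :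
    A ∈ CI2BH H ↔ entryL 0 1 A = 0 ∧ entryL 1 0 A = 0 ∧ entryL 0 0 A = entryL 1 1 A := by
  simp [CI2BH, Submodule.mem_inf, LinearMap.mem_ker, LinearMap.sub_apply, sub_eq_zero, and_assoc]

lemma Vline_inv (α : ℂ) : ∀ A ∈ CI2BH H, ∀ y ∈ Vline α, A y ∈ Vline α := by
  intro A hA y hy
  obtain ⟨h01, h10, hd⟩ := (mem_CI2BH_iff A).mp hA
  rw [mem_Vline] at hy ⊢
  rw [apply_eq A y 0, apply_eq A y 1, h01, h10, hd, hy]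
  simp

lemma Vv_inv : ∀ A ∈ CI2BH H, ∀ y ∈ Vv H, A y ∈ Vv H := by
  intro A hA y hy
  obtain ⟨h01, h10, hd⟩ := (mem_CI2BH_iff A).mp hA
  rw [mem_Vv] at hy ⊢
  rw [apply_eq A y 0, h01, hy]
  simp

lemma projOf_Vline (α : ℂ) (hα : α * (starRingEnd ℂ) α = 1) :
    projOf (E := HS H) (Vline α) (Vline_closed α) =
      M2 ((2 : ℂ)⁻¹ • 1) (((2 : ℂ)⁻¹ * (starRingEnd ℂ) α) • 1)
        (((2 : ℂ)⁻¹ * α) • 1) ((2 : ℂ)⁻¹ • 1) := by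
  refine ContinuousLinearMap.ext fun y => projOf_eq_of (E := HS H) _ _ _ _ ?_ ?_
  · rw [mem_Vline]
    simp only [M2_apply_zero, M2_apply_one, ContinuousLinearMap.smul_apply,
      ContinuousLinearMap.one_apply, smul_add, smul_smul]
    rw [show α * ((2 : ℂ)⁻¹ * (starRingEnd ℂ) α) = (2 : ℂ)⁻¹ by linear_combination (2:ℂ)⁻¹ * hα,
      show α * (2 : ℂ)⁻¹ = (2 : ℂ)⁻¹ * α by ring]
  · rw [Submodule.mem_orthogonal]
    intro w hw
    rw [mem_Vline] at hw
    simp only [PiLp.inner_apply, Fin.sum_univ_two, hs_sub_apply, M2_apply_zero, M2_apply_one,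
      ContinuousLinearMap.smul_apply, ContinuousLinearMap.one_apply, hw,
      inner_sub_right, inner_add_right, inner_smul_right, inner_smul_left]
    linear_combination (-(2 : ℂ)⁻¹ * @inner ℂ _ _ (w 0) (y 0)) * hα

lemma projOf_Vv :
    projOf (E := HS H) (Vv H) Vv_closed = M2 0 0 0 1 := by
  refine ContinuousLinearMap.ext fun y => projOf_eq_of (E := HS H) _ _ _ _ ?_ ?_
  · rw [mem_Vv]; simp
  · rw [Submodule.mem_orthogonal]
    intro w hw
    rw [mem_Vv] at hw
    simp [PiLp.inner_apply, Fin.sum_univ_two, hw]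
lemma projOf_Vline0 :
    projOf (E := HS H) (Vline 0) (Vline_closed 0) = M2 1 0 0 0 := by
  refine ContinuousLinearMap.ext fun y => projOf_eq_of (E := HS H) _ _ _ _ ?_ ?_
  · rw [mem_Vline]; simp
  · rw [Submodule.mem_orthogonal]
    intro w hw
    rw [mem_Vline] at hw
    simp [PiLp.inner_apply, Fin.sum_univ_two, hw]

lemma halpha_one : (1 : ℂ) * (starRingEnd ℂ) 1 = 1 := by simp
lemma halpha_negone : (-1 : ℂ) * (starRingEnd ℂ) (-1) = 1 := by simp
lemma halpha_negI : (-Complex.I) * (starRingEnd ℂ) (-Complex.I) = 1 := by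
  simp [Complex.conj_I]
lemma halpha_I : (Complex.I) * (starRingEnd ℂ) (Complex.I) = 1 := by
  simp [Complex.conj_I]

lemma w1_eq : (w1 : HS H →L[ℂ] HS H) =
    (2 : ℂ) • projOf (E := HS H) (Vline 0) (Vline_closed 0) - 1 := by
  rw [projOf_Vline0]
  refine ContinuousLinearMap.ext fun y => hs_ext fun k => ?_
  fin_cases k <;>
    simp [w1, ContinuousLinearMap.sub_apply, ContinuousLinearMap.smul_apply,
      ContinuousLinearMap.one_apply] <;> module

lemma w2_eq : (w2 : HS H →L[ℂ] HS H) =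
    (2 : ℂ) • projOf (E := HS H) (Vline 1) (Vline_closed 1) - 1 := by
  rw [projOf_Vline 1 halpha_one]
  refine ContinuousLinearMap.ext fun y => hs_ext fun k => ?_
  fin_cases k <;>
    simp [w2, ContinuousLinearMap.sub_apply, ContinuousLinearMap.smul_apply,
      ContinuousLinearMap.one_apply, smul_smul] <;> module

lemma w3_eq : (w3 : HS H →L[ℂ] HS H) =
    (2 : ℂ) • projOf (E := HS H) (Vline (-Complex.I)) (Vline_closed (-Complex.I)) - 1 := by
  rw [projOf_Vline (-Complex.I) halpha_negI]
  refine ContinuousLinearMap.ext fun y => hs_ext fun k => ?_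
  fin_cases k <;>
    simp [w3, ContinuousLinearMap.sub_apply, ContinuousLinearMap.smul_apply,
      ContinuousLinearMap.one_apply, smul_smul, Complex.conj_I] <;> module

lemma compl1 : (1 : HS H →L[ℂ] HS H) - projOf (E := HS H) (Vline 0) (Vline_closed 0) =
    projOf (E := HS H) (Vv H) Vv_closed := by
  rw [projOf_Vline0, projOf_Vv]
  refine ContinuousLinearMap.ext fun y => hs_ext fun k => ?_
  fin_cases k <;>
    simp [ContinuousLinearMap.sub_apply, ContinuousLinearMap.one_apply]

lemma compl2 : (1 : HS H →L[ℂ] HS H) - projOf (E := HS H) (Vline 1) (Vline_closed 1) =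
    projOf (E := HS H) (Vline (-1)) (Vline_closed (-1)) := by
  rw [projOf_Vline 1 halpha_one, projOf_Vline (-1) halpha_negone]
  refine ContinuousLinearMap.ext fun y => hs_ext fun k => ?_
  fin_cases k <;>
    simp [ContinuousLinearMap.sub_apply, ContinuousLinearMap.smul_apply,
      ContinuousLinearMap.one_apply] <;> module

lemma compl3 : (1 : HS H →L[ℂ] HS H) -
      projOf (E := HS H) (Vline (-Complex.I)) (Vline_closed (-Complex.I)) =
    projOf (E := HS H) (Vline Complex.I) (Vline_closed Complex.I) := by
  rw [projOf_Vline (-Complex.I) halpha_negI, projOf_Vline Complex.I halpha_I]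
  refine ContinuousLinearMap.ext fun y => hs_ext fun k => ?_
  fin_cases k <;>
    simp [ContinuousLinearMap.sub_apply, ContinuousLinearMap.smul_apply,
      ContinuousLinearMap.one_apply, Complex.conj_I] <;> module

lemma w1_sq : (w1 : HS H →L[ℂ] HS H) * w1 = 1 := by
  refine ContinuousLinearMap.ext fun y => hs_ext fun k => ?_
  fin_cases k <;> simp [w1, ContinuousLinearMap.mul_apply, ContinuousLinearMap.one_apply]

lemma w2_sq : (w2 : HS H →L[ℂ] HS H) * w2 = 1 := by
  refine ContinuousLinearMap.ext fun y => hs_ext fun k => ?_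
  fin_cases k <;> simp [w2, ContinuousLinearMap.mul_apply, ContinuousLinearMap.one_apply]

lemma w3_sq : (w3 : HS H →L[ℂ] HS H) * w3 = 1 := by
  refine ContinuousLinearMap.ext fun y => hs_ext fun k => ?_
  fin_cases k <;>
    simp [w3, ContinuousLinearMap.mul_apply, ContinuousLinearMap.one_apply, smul_smul,
      mul_neg, neg_mul, Complex.I_mul_I]
lemma norm_csmul_le (c : ℂ) (X : HS H →L[ℂ] HS H) : ‖c • X‖ ≤ ‖c‖ * ‖X‖ := by
  refine ContinuousLinearMap.opNorm_le_bound _ (by positivity) fun y => ?_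
  rw [ContinuousLinearMap.smul_apply, norm_smul, mul_assoc]
  exact mul_le_mul_of_nonneg_left (X.le_opNorm y) (norm_nonneg c)

/-- The distance constant for `ℂ I₂ ⊗ B(H)` is at most `3/2`:
`dist(T, ℂI₂ ⊗ B(H)) ≤ (3/2) · sup_{P ∈ Lat} ‖P^⊥ T P‖`. -/
theorem dist_CI2BH_le (T : (PiLp 2 fun _ : Fin 2 => H) →L[ℂ] (PiLp 2 fun _ : Fin 2 => H)) :
    Metric.infDist T (CI2BH H : Set _) ≤ (3 / 2) *
      ⨆ V : {V : Submodule ℂ (PiLp 2 fun _ : Fin 2 => H) //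
          ∃ h : IsClosed (V : Set (PiLp 2 fun _ : Fin 2 => H)),
            ∀ A ∈ CI2BH H, ∀ x ∈ V, A x ∈ V},
        ‖(ContinuousLinearMap.id ℂ _ - projOf V.1 V.2.choose).comp
          (T.comp (projOf V.1 V.2.choose))‖ := by
  classical
  set Lat := {V : Submodule ℂ (PiLp 2 fun _ : Fin 2 => H) //
      ∃ h : IsClosed (V : Set (PiLp 2 fun _ : Fin 2 => H)),
        ∀ A ∈ CI2BH H, ∀ x ∈ V, A x ∈ V} with hLat
  set f : Lat → ℝ := fun V =>
    ‖(ContinuousLinearMap.id ℂ _ - projOf V.1 V.2.choose).comp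
      (T.comp (projOf V.1 V.2.choose))‖ with hf
  set S := ⨆ V : Lat, f V with hSdef
  -- boundedness of the family
  have hbdd : BddAbove (Set.range f) := by
    refine ⟨‖T‖, ?_⟩
    rintro _ ⟨V, rfl⟩
    show ‖(ContinuousLinearMap.id ℂ (PiLp 2 fun _ : Fin 2 => H) -
        projOf V.1 V.2.choose).comp (T.comp (projOf V.1 V.2.choose))‖ ≤ ‖T‖
    refine ContinuousLinearMap.opNorm_le_bound _ (norm_nonneg T) fun y => ?_
    rw [ContinuousLinearMap.comp_apply, ContinuousLinearMap.comp_apply]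
    calc ‖(ContinuousLinearMap.id ℂ (PiLp 2 fun _ : Fin 2 => H) -
            projOf V.1 V.2.choose) (T (projOf V.1 V.2.choose y))‖
        ≤ ‖T (projOf V.1 V.2.choose y)‖ := by
          rw [ContinuousLinearMap.sub_apply, ContinuousLinearMap.id_apply]
          exact norm_sub_projOf_apply_le V.1 V.2.choose (T (projOf V.1 V.2.choose y))
      _ ≤ ‖T‖ * ‖projOf V.1 V.2.choose y‖ := T.le_opNorm _
      _ ≤ ‖T‖ * ‖y‖ :=
          mul_le_mul_of_nonneg_left (norm_projOf_apply_le _ _ _) (norm_nonneg T)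
  -- the six lattice elements
  have hle : ∀ (V : Submodule ℂ (HS H)) (hV : IsClosed (V : Set (HS H)))
      (hinv : ∀ A ∈ CI2BH H, ∀ x ∈ V, A x ∈ V),
      ‖(1 - projOf V hV) * T * projOf V hV‖ ≤ S := by
    intro V hV hinv
    exact le_ciSup hbdd (⟨V, hV, hinv⟩ : Lat)
  have hS0 : (0 : ℝ) ≤ S :=
    le_trans (norm_nonneg _) (hle (Vline 0) (Vline_closed 0) (Vline_inv 0))
  -- bound for each symmetry
  have key : ∀ (V V' : Submodule ℂ (HS H)) (hV : IsClosed (V : Set (HS H)))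
      (hV' : IsClosed ((V' : Submodule ℂ (HS H)) : Set (HS H)))
      (hinv : ∀ A ∈ CI2BH H, ∀ x ∈ V, A x ∈ V)
      (hinv' : ∀ A ∈ CI2BH H, ∀ x ∈ V', A x ∈ V')
      (hcompl : (1 : HS H →L[ℂ] HS H) - projOf V hV = projOf V' hV')
      (w : HS H →L[ℂ] HS H) (hw : w = (2 : ℂ) • projOf V hV - 1)
      (hww : w * w = 1),
      ‖T - w * T * w‖ ≤ 2 * S := by
    intro V V' hV hV' hinv hinv' hcompl w hw hww
    set P := projOf V hV with hP
    have h1 : ‖(1 - P) * T * P‖ ≤ S := hle V hV hinv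
    have h2 : ‖P * T * (1 - P)‖ ≤ S := by
      have hPP : P = 1 - projOf V' hV' := by rw [← hcompl]; abel
      calc ‖P * T * (1 - P)‖ = ‖(1 - projOf V' hV') * T * projOf V' hV'‖ := by
            rw [hcompl, hPP]
        _ ≤ S := hle V' hV' hinv'
    have hcomm : ‖P * T - T * P‖ ≤ S := commutator_bound V hV T hS0 h1 h2
    have hdec : T - w * T * w = w * (w * T - T * w) := by
      rw [mul_sub, ← mul_assoc, hww, one_mul, mul_assoc]
    have hiso : ∀ y, ‖w y‖ = ‖y‖ := by
      intro y
      rw [hw]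
      exact norm_sym_apply V hV y
    have hnorm1 : ‖T - w * T * w‖ ≤ ‖w * T - T * w‖ := by
      rw [hdec]
      refine ContinuousLinearMap.opNorm_le_bound _ (norm_nonneg _) fun y => ?_
      rw [ContinuousLinearMap.mul_apply, hiso]
      exact ContinuousLinearMap.le_opNorm _ _
    have hcomm2 : w * T - T * w = (2 : ℂ) • (P * T - T * P) := by
      rw [hw]
      simp only [sub_mul, mul_sub, smul_mul_assoc, mul_smul_comm, one_mul, mul_one,
        smul_sub]
      abel
    have hn2 : ‖w * T - T * w‖ ≤ 2 * ‖P * T - T * P‖ := by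
      rw [hcomm2]
      have := norm_csmul_le (2 : ℂ) (P * T - T * P)
      simpa using this
    calc ‖T - w * T * w‖ ≤ ‖w * T - T * w‖ := hnorm1
      _ ≤ 2 * ‖P * T - T * P‖ := hn2
      _ ≤ 2 * S := by linarith
  have k1 : ‖T - w1 * T * w1‖ ≤ 2 * S :=
    key (Vline 0) (Vv H) (Vline_closed 0) Vv_closed (Vline_inv 0) Vv_inv compl1 w1 w1_eq w1_sq
  have k2 : ‖T - w2 * T * w2‖ ≤ 2 * S :=
    key (Vline 1) (Vline (-1)) (Vline_closed 1) (Vline_closed (-1)) (Vline_inv 1)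
      (Vline_inv (-1)) compl2 w2 w2_eq w2_sq
  have k3 : ‖T - w3 * T * w3‖ ≤ 2 * S :=
    key (Vline (-Complex.I)) (Vline Complex.I) (Vline_closed (-Complex.I))
      (Vline_closed Complex.I) (Vline_inv (-Complex.I)) (Vline_inv Complex.I) compl3
      w3 w3_eq w3_sq
  have hdist : Metric.infDist T (CI2BH H : Set _) ≤ ‖T - Davg T‖ := by
    have := Metric.infDist_le_dist_of_mem (x := T) (Davg_mem T)
    rwa [dist_eq_norm] at this
  have hTD : T - Davg T = (4 : ℂ)⁻¹ •
      ((T - w1 * T * w1) + (T - w2 * T * w2) + (T - w3 * T * w3)) := by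
    rw [Davg]
    module
  have hnormTD : ‖T - Davg T‖ ≤ (4 : ℝ)⁻¹ * (2 * S + 2 * S + 2 * S) := by
    rw [hTD]
    refine le_trans (norm_csmul_le _ _) ?_
    have h4 : ‖(4 : ℂ)⁻¹‖ = (4 : ℝ)⁻¹ := by norm_num
    rw [h4]
    refine mul_le_mul_of_nonneg_left ?_ (by norm_num)
    calc ‖(T - w1 * T * w1) + (T - w2 * T * w2) + (T - w3 * T * w3)‖
        ≤ ‖T - w1 * T * w1‖ + ‖T - w2 * T * w2‖ + ‖T - w3 * T * w3‖ := norm_add₃_le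
      _ ≤ 2 * S + 2 * S + 2 * S := by linarith
  calc Metric.infDist T (CI2BH H : Set _) ≤ ‖T - Davg T‖ := hdist
    _ ≤ (4 : ℝ)⁻¹ * (2 * S + 2 * S + 2 * S) := hnormTD
    _ = (3 / 2) * S := by ring
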